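/- (Base case of Theorem, single covering step) Let w ∈ Sym(n), t = (a,b) with a < b, w⁻¹(a) < w⁻¹(b) and ℓ(wt) = ℓ(w) + 1. With α = π/4, for every y ∈ [0, h_n], H(B_n(w), y) ≤ H(B_n(wt), y); moreover the inequality is strict exactly when Σ_{i=1}^{a-1} sin θ_{w⁻¹(i)} < y < Σ_{i=1}^{b} sin θ_{w⁻¹(i)}, where θ_k = (k-1)(π/2)/(n-1) + π/4. -/

import Mathlib

open Real Finset

/-- The underlying vector β_n^k(α). -/
noncomputable def beta (n : ℕ) (α : ℝ) (k : ℕ) : ℝ × ℝ :=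
  (-(Real.cos (((k : ℝ) - 1) * (Real.pi - 2 * α) / ((n : ℝ) - 1) + α)),
    Real.sin (((k : ℝ) - 1) * (Real.pi - 2 * α) / ((n : ℝ) - 1) + α))

/-- Coxeter length of a permutation = number of inversions. -/
def invLen {n : ℕ} (w : Equiv.Perm (Fin n)) : ℕ :=
  ((Finset.univ : Finset (Fin n × Fin n)).filter (fun p => p.1 < p.2 ∧ w p.2 < w p.1)).card

/-- The c-th vertex (partial sum of the first c edge vectors) of the border of w. -/
noncomputable def vert (n : ℕ) (α : ℝ) (w : Equiv.Perm (Fin n)) (c : ℕ) : ℝ × ℝ :=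
  ∑ i ∈ Finset.univ.filter (fun i : Fin n => (i : ℕ) < c), beta n α ((w⁻¹ i).val + 1)

/-- The border of w: the piecewise-linear path from the origin. -/
noncomputable def border (n : ℕ) (α : ℝ) (w : Equiv.Perm (Fin n)) : Set (ℝ × ℝ) :=
  ⋃ i ∈ Finset.range n, segment ℝ (vert n α w i) (vert n α w (i + 1))

/-- The strong Bruhat order: transitive extension of w <_B wt when ℓ(wt) = ℓ(w) + 1. -/
def BruhatLt {n : ℕ} (u v : Equiv.Perm (Fin n)) : Prop :=
  Relation.TransGen
    (fun x y => (∃ a b : Fin n, a ≠ b ∧ y = Equiv.swap a b * x) ∧ invLen y = invLen x + 1) u v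

/-!
At `α = π / 4` every edge `(-cos θ, sin θ)` of a border lies in the cone `|x| ≤ y`, so a border is
the graph `x = H(y)` of a function with slopes in `[-1, 1]`. Swapping the edges in positions `a` and
`b` leaves the path unchanged below edge `a` and above edge `b`. In between, both paths run through
the same middle block of edges, shifted vertically by the difference of the heights of the two
swapped edges; as the block has slopes in `[-1, 1]`, the shift costs at most that difference
horizontally. Putting the more rightward edge first gains strictly more, because the chord from
edge `a` to edge `b` has direction angle `(θ_a + θ_b) / 2` strictly inside the cone:
`|sin θ_b - sin θ_a| < cos θ_a - cos θ_b`.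
-/

/-- `clip s x` is the length of `[0, s] ∩ (-∞, x]` (for `0 ≤ s`). -/
noncomputable def clip (s x : ℝ) : ℝ := min (max x 0) s

section Clip

variable {s s' x : ℝ}

lemma clip_of_nonpos (hs : 0 ≤ s) (hx : x ≤ 0) : clip s x = 0 := by
  rw [clip, max_eq_right hx, min_eq_left hs]

lemma clip_of_le (hs : 0 ≤ s) (hx : s ≤ x) : clip s x = s := by
  rw [clip, max_eq_left (hs.trans hx), min_eq_right hx]

lemma clip_of_mem_Icc (h0 : 0 ≤ x) (hx : x ≤ s) : clip s x = x := by
  rw [clip, max_eq_left h0, min_eq_left hx]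

lemma clip_mono : Monotone (clip s) := fun _ _ h => min_le_min_right s (max_le_max_right 0 h)

lemma clip_zero_left (x : ℝ) : clip 0 x = 0 := min_eq_right (le_max_right x 0)

lemma clip_add (hs : 0 ≤ s) (hs' : 0 ≤ s') : clip (s + s') x = clip s x + clip s' (x - s) := by
  simp only [clip, min_def, max_def]
  split_ifs <;> linarith

end Clip

noncomputable def edgeX (v : ℝ × ℝ) (y : ℝ) : ℝ := v.1 / v.2 * clip v.2 y

section Edge

variable {v : ℝ × ℝ}

lemma div_mul_of_abs_le (hv : |v.1| ≤ v.2) : v.1 / v.2 * v.2 = v.1 :=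
  div_mul_cancel_of_imp fun h => abs_nonpos_iff.1 (h ▸ hv)

lemma abs_div_le_one (hv : |v.1| ≤ v.2) : |v.1 / v.2| ≤ 1 := by
  rw [abs_div]
  exact div_le_one_of_le₀ ((abs_of_nonneg ((abs_nonneg _).trans hv)).symm ▸ hv) (abs_nonneg _)

lemma edgeX_of_nonpos (hv : |v.1| ≤ v.2) {y : ℝ} (hy : y ≤ 0) : edgeX v y = 0 := by
  rw [edgeX, clip_of_nonpos ((abs_nonneg _).trans hv) hy, mul_zero]

lemma edgeX_of_le (hv : |v.1| ≤ v.2) {y : ℝ} (hy : v.2 ≤ y) : edgeX v y = v.1 := by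
  rw [edgeX, clip_of_le ((abs_nonneg _).trans hv) hy, div_mul_of_abs_le hv]

lemma edgeX_mul_snd (hv : |v.1| ≤ v.2) {t : ℝ} (ht : t ∈ Set.Icc (0 : ℝ) 1) :
    edgeX v (t * v.2) = t * v.1 := by
  have hs : 0 ≤ v.2 := (abs_nonneg _).trans hv
  rw [edgeX, clip_of_mem_Icc (mul_nonneg ht.1 hs) (mul_le_of_le_one_left hs ht.2),
    mul_left_comm, div_mul_of_abs_le hv]

lemma abs_edgeX_sub_le (hv : |v.1| ≤ v.2) {y y' : ℝ} (hy : y ≤ y') :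
    |edgeX v y' - edgeX v y| ≤ clip v.2 y' - clip v.2 y := by
  rw [edgeX, edgeX, ← mul_sub, abs_mul, abs_of_nonneg (sub_nonneg.2 (clip_mono hy))]
  exact mul_le_of_le_one_left (sub_nonneg.2 (clip_mono hy)) (abs_div_le_one hv)

end Edge

noncomputable def height (e : ℕ → ℝ × ℝ) (c d : ℕ) : ℝ := ∑ k ∈ Ico c d, (e k).2

/-- Under the cone condition `|x| ≤ y` on its edges, the path through `e c, …, e (d - 1)` is a
graph over the `y`-axis; `pathX e c d y` is its `x`-coordinate at height `y` above its first
vertex. -/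
noncomputable def pathX (e : ℕ → ℝ × ℝ) (c d : ℕ) (y : ℝ) : ℝ :=
  ∑ j ∈ Ico c d, edgeX (e j) (y - height e c j)

noncomputable def pathVert (e : ℕ → ℝ × ℝ) (c : ℕ) : ℝ × ℝ := ∑ k ∈ range c, e k

section Path

variable {e : ℕ → ℝ × ℝ} {c m d : ℕ}

lemma height_add_height (hcm : c ≤ m) (hmd : m ≤ d) :
    height e c m + height e m d = height e c d :=
  sum_Ico_consecutive _ hcm hmd

lemma height_succ (hcd : c ≤ d) : height e c (d + 1) = height e c d + (e d).2 :=
  sum_Ico_succ_top hcd _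

lemma height_nonneg (he : ∀ j, |(e j).1| ≤ (e j).2) : 0 ≤ height e c d :=
  sum_nonneg fun j _ => (abs_nonneg _).trans (he j)

lemma height_mono (he : ∀ j, |(e j).1| ≤ (e j).2) (hcm : c ≤ m) (hmd : m ≤ d) :
    height e c m ≤ height e c d := by
  rw [← height_add_height hcm hmd]
  exact le_add_of_nonneg_right (height_nonneg he)

lemma height_congr {e' : ℕ → ℝ × ℝ} (h : ∀ j ∈ Ico c d, e' j = e j) :
    height e' c d = height e c d :=
  sum_congr rfl fun j hj => by rw [h j hj]

lemma pathX_congr {e' : ℕ → ℝ × ℝ} (h : ∀ j ∈ Ico c d, e' j = e j) :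
    pathX e' c d = pathX e c d := by
  funext y
  refine sum_congr rfl fun j hj => ?_
  have hsub : ∀ k ∈ Ico c j, e' k = e k := fun k hk =>
    h k (Ico_subset_Ico_right (mem_Ico.1 hj).2.le hk)
  rw [h j hj, height_congr hsub]

lemma pathX_add_pathX (hcm : c ≤ m) (hmd : m ≤ d) (y : ℝ) :
    pathX e c m y + pathX e m d (y - height e c m) = pathX e c d y := by
  rw [pathX, pathX, pathX, ← sum_Ico_consecutive _ hcm hmd]
  congr 1
  refine sum_congr rfl fun j hj => ?_
  rw [sub_sub, height_add_height hcm (mem_Ico.1 hj).1]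

lemma pathX_succ (hcd : c ≤ d) (y : ℝ) :
    pathX e c (d + 1) y = pathX e c d y + edgeX (e d) (y - height e c d) :=
  sum_Ico_succ_top hcd _

lemma pathX_eq_edgeX_add (hcd : c < d) (y : ℝ) :
    pathX e c d y = edgeX (e c) y + pathX e (c + 1) d (y - (e c).2) := by
  rw [← pathX_add_pathX c.le_succ hcd, pathX_succ le_rfl]
  simp [pathX, height]

lemma pathX_of_nonpos (he : ∀ j, |(e j).1| ≤ (e j).2) {y : ℝ} (hy : y ≤ 0) :
    pathX e c d y = 0 :=
  sum_eq_zero fun j _ => edgeX_of_nonpos (he j) (by linarith [height_nonneg (c := c) (d := j) he])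

lemma pathX_of_height_le (he : ∀ j, |(e j).1| ≤ (e j).2) {y : ℝ} (hy : height e c d ≤ y) :
    pathX e c d y = ∑ j ∈ Ico c d, (e j).1 := by
  refine sum_congr rfl fun j hj => edgeX_of_le (he j) ?_
  obtain ⟨hcj, hjd⟩ := mem_Ico.1 hj
  have := height_mono he (Nat.le_succ_of_le hcj) hjd
  rw [height_succ hcj] at this
  linarith

lemma abs_pathX_sub_le (he : ∀ j, |(e j).1| ≤ (e j).2) (hcd : c ≤ d) {u v : ℝ} (huv : u ≤ v) :
    |pathX e c d v - pathX e c d u| ≤ clip (height e c d) v - clip (height e c d) u := by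
  induction d, hcd using Nat.le_induction with
  | base => simp [pathX, height, clip_zero_left]
  | succ d hcd ih =>
    have hedge := abs_edgeX_sub_le (he d) (sub_le_sub_right huv (height e c d))
    rw [pathX_succ hcd, pathX_succ hcd, height_succ hcd,
      clip_add (height_nonneg he) ((abs_nonneg _).trans (he d)),
      clip_add (height_nonneg he) ((abs_nonneg _).trans (he d))]
    calc _ ≤ |pathX e c d v - pathX e c d u|
          + |edgeX (e d) (v - height e c d) - edgeX (e d) (u - height e c d)| := by
          rw [add_sub_add_comm]; exact abs_add_le _ _
      _ ≤ _ := by linarith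

lemma abs_pathX_sub_le_abs_clip_sub (he : ∀ j, |(e j).1| ≤ (e j).2) (hcd : c ≤ d) (u v : ℝ) :
    |pathX e c d u - pathX e c d v| ≤ |clip (height e c d) u - clip (height e c d) v| := by
  rcases le_total u v with huv | huv
  · rw [abs_sub_comm, abs_sub_comm (clip _ u)]
    exact (abs_pathX_sub_le he hcd huv).trans (le_abs_self _)
  · exact (abs_pathX_sub_le he hcd huv).trans (le_abs_self _)

lemma fst_eq_pathX_of_mem_segment (he : ∀ j, |(e j).1| ≤ (e j).2) {n i : ℕ} (hi : i < n)
    {p : ℝ × ℝ} (hp : p ∈ segment ℝ (pathVert e i) (pathVert e (i + 1))) :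
    p.1 = pathX e 0 n p.2 := by
  rw [segment_eq_image', pathVert, pathVert, sum_range_succ, add_sub_cancel_left] at hp
  obtain ⟨t, ht, rfl⟩ := hp
  have hs : 0 ≤ (e i).2 := (abs_nonneg _).trans (he i)
  have hh : ∑ k ∈ range i, (e k).2 = height e 0 i := by rw [height, range_eq_Ico]
  simp only [Prod.fst_add, Prod.snd_add, Prod.fst_sum, Prod.snd_sum, Prod.smul_fst, Prod.smul_snd,
    smul_eq_mul, hh]
  rw [← pathX_add_pathX i.zero_le hi.le, add_sub_cancel_left, pathX_eq_edgeX_add hi,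
    edgeX_mul_snd (he i) ht, pathX_of_height_le he (le_add_of_nonneg_right (mul_nonneg ht.1 hs)),
    pathX_of_nonpos he (by nlinarith [ht.2]), range_eq_Ico, add_zero]

end Path

/-- `ma, sa` and `mb, sb` are the slopes and heights of two swapped edges and `S` the height of the
block between them: the right side is what the outer edges gain by the swap, the left side bounds
what the vertically shifted middle block can lose. -/
lemma abs_clip_sub_lt_swap_gap {ma mb sa sb S t : ℝ} (hsa : 0 < sa) (hsb : 0 < sb) (hS : 0 ≤ S)
    (hma : |ma| ≤ 1) (hmb : |mb| ≤ 1) (hK : |sb - sa| < mb * sb - ma * sa)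
    (ht0 : 0 < t) (htT : t < sa + S + sb) :
    |clip S (t - sa) - clip S (t - sb)| <
      mb * clip sb t - ma * clip sa t
        + (ma * clip sa (t - sb - S) - mb * clip sb (t - sa - S)) := by
  have hm : ma < mb := by
    by_contra! h
    rw [abs_le] at hma hmb
    rcases le_total sa sb with h' | h' <;> nlinarith [le_abs_self (sb - sa), neg_abs_le (sb - sa)]
  rw [abs_lt] at hK ⊢
  rw [abs_le] at hma hmb
  rcases le_total t sa with h1 | h1 <;> rcases le_total t sb with h2 | h2 <;>
    rcases le_total t (sa + S) with h3 | h3 <;> rcases le_total t (sb + S) with h4 | h4 <;>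
    simp (disch := with_unfolding_all linarith) only
      [clip_of_nonpos, clip_of_le, clip_of_mem_Icc] <;>
    constructor <;> nlinarith

section SwapBlock

variable {va vb : ℝ × ℝ} {S : ℝ} {g : ℝ → ℝ}

lemma swap_block_eq (hva : |va.1| ≤ va.2) (hvb : |vb.1| ≤ vb.2) (hS : 0 ≤ S)
    (hg : ∀ u v, |g u - g v| ≤ |clip S u - clip S v|) {t : ℝ}
    (ht : t ≤ 0 ∨ va.2 + S + vb.2 ≤ t) :
    edgeX vb t + g (t - vb.2) + edgeX va (t - vb.2 - S)
      = edgeX va t + g (t - va.2) + edgeX vb (t - va.2 - S) := by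
  have hsa : 0 ≤ va.2 := (abs_nonneg _).trans hva
  have hsb : 0 ≤ vb.2 := (abs_nonneg _).trans hvb
  have hg_eq : ∀ u v, clip S u = clip S v → g u = g v := fun u v h =>
    sub_eq_zero.1 (abs_nonpos_iff.1 (by simpa [h] using hg u v))
  rcases ht with ht | ht
  · rw [edgeX_of_nonpos hva ht, edgeX_of_nonpos hvb ht, edgeX_of_nonpos hva (by linarith),
      edgeX_of_nonpos hvb (by linarith),
      hg_eq (t - vb.2) (t - va.2)
        ((clip_of_nonpos hS (by linarith)).trans (clip_of_nonpos hS (by linarith)).symm)]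
  · rw [edgeX_of_le hva (by linarith), edgeX_of_le hvb (by linarith),
      edgeX_of_le hva (by linarith), edgeX_of_le hvb (by linarith),
      hg_eq (t - vb.2) (t - va.2)
        ((clip_of_le hS (by linarith)).trans (clip_of_le hS (by linarith)).symm)]
    ring

lemma swap_block_lt (hva : |va.1| ≤ va.2) (hvb : |vb.1| ≤ vb.2) (hK : |vb.2 - va.2| < vb.1 - va.1)
    (hS : 0 ≤ S) (hg : ∀ u v, |g u - g v| ≤ |clip S u - clip S v|) {t : ℝ} (ht0 : 0 < t)
    (htT : t < va.2 + S + vb.2) :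
    edgeX va t + g (t - va.2) + edgeX vb (t - va.2 - S)
      < edgeX vb t + g (t - vb.2) + edgeX va (t - vb.2 - S) := by
  have hsa : 0 < va.2 := by
    by_contra! h
    linarith [abs_nonneg va.1, le_abs_self va.1, neg_abs_le va.1, le_abs_self (vb.2 - va.2),
      le_abs_self vb.1]
  have hsb : 0 < vb.2 := by
    by_contra! h
    linarith [abs_nonneg vb.1, le_abs_self vb.1, neg_abs_le vb.1, neg_abs_le (vb.2 - va.2),
      neg_abs_le va.1]
  have hgap := abs_clip_sub_lt_swap_gap hsa hsb hS (abs_div_le_one hva) (abs_div_le_one hvb)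
    (by rwa [div_mul_of_abs_le hva, div_mul_of_abs_le hvb]) ht0 htT
  have hmid := hg (t - vb.2) (t - va.2)
  rw [abs_sub_comm (clip S _)] at hmid
  simp only [edgeX]
  linarith [neg_abs_le (g (t - vb.2) - g (t - va.2))]

lemma swap_block_le (hva : |va.1| ≤ va.2) (hvb : |vb.1| ≤ vb.2) (hK : |vb.2 - va.2| < vb.1 - va.1)
    (hS : 0 ≤ S) (hg : ∀ u v, |g u - g v| ≤ |clip S u - clip S v|) (t : ℝ) :
    edgeX va t + g (t - va.2) + edgeX vb (t - va.2 - S)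
        ≤ edgeX vb t + g (t - vb.2) + edgeX va (t - vb.2 - S) ∧
      (edgeX va t + g (t - va.2) + edgeX vb (t - va.2 - S)
          < edgeX vb t + g (t - vb.2) + edgeX va (t - vb.2 - S) ↔
        0 < t ∧ t < va.2 + S + vb.2) := by
  by_cases ht : 0 < t ∧ t < va.2 + S + vb.2
  · have hlt := swap_block_lt hva hvb hK hS hg ht.1 ht.2
    exact ⟨hlt.le, iff_of_true hlt ht⟩
  · have heq := swap_block_eq hva hvb hS hg (by rw [not_and_or, not_lt, not_lt] at ht; exact ht)
    exact ⟨heq.ge, iff_of_false (fun h => h.ne' heq) ht⟩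

end SwapBlock

section Swap

variable {e : ℕ → ℝ × ℝ} {A B n : ℕ}

lemma height_block (hAB : A < B) :
    height e A (B + 1) = (e A).2 + height e (A + 1) B + (e B).2 := by
  rw [height_succ hAB.le, ← height_add_height A.le_succ hAB]
  simp [height]

lemma pathX_block (hAB : A < B) (z : ℝ) :
    pathX e A (B + 1) z
      = edgeX (e A) z + pathX e (A + 1) B (z - (e A).2)
        + edgeX (e B) (z - (e A).2 - height e (A + 1) B) := by
  rw [pathX_eq_edgeX_add (Nat.lt_succ_of_le hAB.le), pathX_succ hAB, add_assoc]

lemma pathX_eq_add_block_add (hAB : A ≤ B + 1) (hBn : B + 1 ≤ n) (y : ℝ) :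
    pathX e 0 n y = pathX e 0 A y + pathX e A (B + 1) (y - height e 0 A)
      + pathX e (B + 1) n (y - height e 0 (B + 1)) := by
  rw [← pathX_add_pathX A.zero_le (hAB.trans hBn), ← pathX_add_pathX hAB hBn, sub_sub,
    height_add_height A.zero_le hAB, add_assoc]

theorem pathX_le_pathX_comp_swap (he : ∀ j, |(e j).1| ≤ (e j).2) (hAB : A < B) (hBn : B < n)
    (hK : |(e B).2 - (e A).2| < (e B).1 - (e A).1) (y : ℝ) :
    pathX e 0 n y ≤ pathX (e ∘ Equiv.swap A B) 0 n y ∧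
      (pathX e 0 n y < pathX (e ∘ Equiv.swap A B) 0 n y ↔
        height e 0 A < y ∧ y < height e 0 (B + 1)) := by
  set e' := e ∘ Equiv.swap A B
  have hAB' : A ≤ B + 1 := by omega
  have hA : e' A = e B := by simp [e']
  have hB : e' B = e A := by simp [e']
  have hout : ∀ c d, d ≤ A ∨ B < c ∨ A < c ∧ d ≤ B → ∀ j ∈ Ico c d, e' j = e j := by
    intro c d hcd j hj
    have := mem_Ico.1 hj
    simp [e', Equiv.swap_apply_of_ne_of_ne (by omega : j ≠ A) (by omega : j ≠ B)]
  have hlow := hout 0 A (by omega)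
  have hmid := hout (A + 1) B (by omega)
  have hheight : height e' 0 (B + 1) = height e 0 (B + 1) := by
    rw [← height_add_height A.zero_le hAB', ← height_add_height A.zero_le hAB', height_block hAB,
      height_block hAB, height_congr hlow, height_congr hmid, hA, hB]
    ring
  have hwindow :
      height e 0 (B + 1) = height e 0 A + ((e A).2 + height e (A + 1) B + (e B).2) := by
    rw [← height_block hAB, height_add_height A.zero_le hAB']
  rw [pathX_eq_add_block_add hAB' hBn, pathX_eq_add_block_add (e := e') hAB' hBn,
    pathX_congr hlow, pathX_congr (hout (B + 1) n (by omega)), height_congr hlow, hheight,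
    pathX_block hAB, pathX_block hAB, hA, hB, pathX_congr hmid, height_congr hmid,
    add_le_add_iff_right, add_le_add_iff_left, add_lt_add_iff_right, add_lt_add_iff_left, hwindow,
    ← and_congr sub_pos sub_lt_iff_lt_add']
  exact swap_block_le (he A) (he B) hK (height_nonneg he) (abs_pathX_sub_le_abs_clip_sub he hAB) _

end Swap

lemma sin_sub_cos_eq (ψ : ℝ) : sin ψ - cos ψ = √2 * sin (ψ - π / 4) := by
  rw [sin_sub, cos_pi_div_four, sin_pi_div_four]
  ring_nf
  rw [sq_sqrt zero_le_two]
  ring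

lemma sin_add_cos_eq (ψ : ℝ) : sin ψ + cos ψ = √2 * sin (ψ + π / 4) := by
  rw [sin_add, cos_pi_div_four, sin_pi_div_four]
  ring_nf
  rw [sq_sqrt zero_le_two]
  ring

lemma abs_cos_le_sin {ψ : ℝ} (hψ : ψ ∈ Set.Icc (π / 4) (3 * π / 4)) : |cos ψ| ≤ sin ψ := by
  obtain ⟨h1, h2⟩ := hψ
  refine abs_le.2 ⟨?_, ?_⟩
  · have := sin_nonneg_of_nonneg_of_le_pi (x := ψ + π / 4) (by linarith [pi_pos]) (by linarith)
    nlinarith [sin_add_cos_eq ψ, sqrt_nonneg 2]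
  · have := sin_nonneg_of_nonneg_of_le_pi (x := ψ - π / 4) (by linarith) (by linarith)
    nlinarith [sin_sub_cos_eq ψ, sqrt_nonneg 2]

lemma abs_cos_lt_sin {ψ : ℝ} (hψ : ψ ∈ Set.Ioo (π / 4) (3 * π / 4)) : |cos ψ| < sin ψ := by
  obtain ⟨h1, h2⟩ := hψ
  refine abs_lt.2 ⟨?_, ?_⟩
  · have := sin_pos_of_pos_of_lt_pi (x := ψ + π / 4) (by linarith [pi_pos]) (by linarith)
    nlinarith [sin_add_cos_eq ψ, sqrt_pos.2 (two_pos : (0 : ℝ) < 2)]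
  · have := sin_pos_of_pos_of_lt_pi (x := ψ - π / 4) (by linarith) (by linarith)
    nlinarith [sin_sub_cos_eq ψ, sqrt_pos.2 (two_pos : (0 : ℝ) < 2)]

lemma abs_sin_sub_sin_lt_cos_sub_cos {θ φ : ℝ} (hθ : π / 4 ≤ θ) (hθφ : θ < φ) (hφ : φ ≤ 3 * π / 4) :
    |sin φ - sin θ| < cos θ - cos φ := by
  have hhalf : 0 < sin ((φ - θ) / 2) :=
    sin_pos_of_pos_of_lt_pi (by linarith) (by linarith [pi_pos])
  have hmid := abs_cos_lt_sin (ψ := (φ + θ) / 2) ⟨by linarith, by linarith⟩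
  rw [sin_sub_sin, cos_sub_cos, abs_mul, abs_mul, abs_two, abs_of_pos hhalf,
    show (θ - φ) / 2 = -((φ - θ) / 2) by ring, sin_neg, add_comm θ]
  nlinarith

/-- The angle `θ_k`, written as in `beta` so that `beta_pi_div_four` holds by `rfl`. -/
noncomputable def edgeAngle (n k : ℕ) : ℝ :=
  ((k : ℝ) - 1) * (π - 2 * (π / 4)) / ((n : ℝ) - 1) + π / 4

lemma beta_pi_div_four (n k : ℕ) : beta n (π / 4) k = (-cos (edgeAngle n k), sin (edgeAngle n k)) :=
  rfl

lemma edgeAngle_eq (n k : ℕ) : edgeAngle n k = π / 4 + π / 2 * (((k : ℝ) - 1) / ((n : ℝ) - 1)) := by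
  rw [edgeAngle]; ring

lemma edgeAngle_mem {n k : ℕ} (hk : 1 ≤ k) (hkn : k ≤ n) :
    edgeAngle n k ∈ Set.Icc (π / 4) (3 * π / 4) := by
  have hk' : (1 : ℝ) ≤ k := by exact_mod_cast hk
  have hkn' : (k : ℝ) ≤ n := by exact_mod_cast hkn
  have h0 : 0 ≤ ((k : ℝ) - 1) / ((n : ℝ) - 1) := div_nonneg (by linarith) (by linarith)
  have h1 : ((k : ℝ) - 1) / ((n : ℝ) - 1) ≤ 1 := div_le_one_of_le₀ (by linarith) (by linarith)
  rw [edgeAngle_eq]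
  constructor <;> nlinarith [pi_pos]

lemma edgeAngle_lt {n k k' : ℕ} (hk : 1 ≤ k) (hkk' : k < k') (hk' : k' ≤ n) :
    edgeAngle n k < edgeAngle n k' := by
  have hn : (1 : ℝ) < n := by exact_mod_cast (hk.trans_lt hkk').trans_le hk'
  have hkk'' : (k : ℝ) < k' := by exact_mod_cast hkk'
  rw [edgeAngle_eq, edgeAngle_eq]
  gcongr

noncomputable def edge (n : ℕ) (w : Equiv.Perm (Fin n)) (i : ℕ) : ℝ × ℝ :=
  if h : i < n then beta n (π / 4) ((w⁻¹ ⟨i, h⟩ : ℕ) + 1) else 0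

section Border

variable {n : ℕ} (w : Equiv.Perm (Fin n))

lemma edge_fin (i : Fin n) : edge n w i = beta n (π / 4) ((w⁻¹ i : ℕ) + 1) := dif_pos i.isLt

lemma abs_edge_fst_le (j : ℕ) : |(edge n w j).1| ≤ (edge n w j).2 := by
  unfold edge
  split_ifs with h
  · rw [beta_pi_div_four, abs_neg]
    exact abs_cos_le_sin (edgeAngle_mem le_add_self (Fin.is_lt _))
  · simp

lemma edge_gap {a b : Fin n} (hw : w⁻¹ a < w⁻¹ b) :
    |(edge n w b).2 - (edge n w a).2| < (edge n w b).1 - (edge n w a).1 := by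
  rw [edge_fin, edge_fin, beta_pi_div_four, beta_pi_div_four, neg_sub_neg]
  exact abs_sin_sub_sin_lt_cos_sub_cos (edgeAngle_mem le_add_self (Fin.is_lt _)).1
    (edgeAngle_lt le_add_self (by simpa using hw) (Fin.is_lt _))
    (edgeAngle_mem le_add_self (Fin.is_lt _)).2

lemma edge_swap_mul (a b : Fin n) :
    edge n (Equiv.swap a b * w) = edge n w ∘ Equiv.swap (a : ℕ) b := by
  funext i
  by_cases hi : i < n
  · have hswap : Equiv.swap (a : ℕ) b i = (Equiv.swap a b ⟨i, hi⟩ : ℕ) :=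
      Fin.val_injective.swap_apply a b ⟨i, hi⟩
    rw [Function.comp_apply, hswap, edge_fin, edge, dif_pos hi, mul_inv_rev, Equiv.swap_inv,
      Equiv.Perm.mul_apply]
  · rw [Function.comp_apply, Equiv.swap_apply_of_ne_of_ne (by omega) (by omega), edge, edge,
      dif_neg hi, dif_neg hi]

lemma vert_eq_pathVert {c : ℕ} (hc : c ≤ n) : vert n (π / 4) w c = pathVert (edge n w) c := by
  simp_rw [vert, pathVert, sum_filter, ← edge_fin w]
  rw [Fin.sum_univ_eq_sum_range (fun k => if k < c then edge n w k else 0), ← sum_filter]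
  congr 1
  ext k
  simp only [mem_filter, mem_range]
  omega

lemma fst_eq_pathX_of_mem_border {p : ℝ × ℝ} (hp : p ∈ border n (π / 4) w) :
    p.1 = pathX (edge n w) 0 n p.2 := by
  simp only [border, Set.mem_iUnion, mem_range] at hp
  obtain ⟨i, hi, hp⟩ := hp
  rw [vert_eq_pathVert w hi.le, vert_eq_pathVert w hi] at hp
  exact fst_eq_pathX_of_mem_segment (abs_edge_fst_le w) hi hp

lemma vert_snd_eq_height {c : ℕ} (hc : c ≤ n) : (vert n (π / 4) w c).2 = height (edge n w) 0 c := by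
  rw [vert_eq_pathVert w hc, pathVert, Prod.snd_sum, height, range_eq_Ico]

end Border

theorem covering_step_precedes_general {n : ℕ} (w : Equiv.Perm (Fin n)) (a b : Fin n)
    (hab : a < b) (hw : w⁻¹ a < w⁻¹ b) :
    ∀ p ∈ border n (Real.pi / 4) w, ∀ q ∈ border n (Real.pi / 4) (Equiv.swap a b * w),
      p.2 = q.2 →
        (p.1 ≤ q.1 ∧
          (p.1 < q.1 ↔
            (vert n (Real.pi / 4) w (a : ℕ)).2 < p.2 ∧
              p.2 < (vert n (Real.pi / 4) w ((b : ℕ) + 1)).2)) := by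
  intro p hp q hq hpq
  rw [fst_eq_pathX_of_mem_border w hp, fst_eq_pathX_of_mem_border _ hq, ← hpq, edge_swap_mul,
    vert_snd_eq_height w a.isLt.le, vert_snd_eq_height w b.isLt]
  exact pathX_le_pathX_comp_swap (abs_edge_fst_le w) hab b.isLt (edge_gap w hw) p.2

/-- single covering step, α = π/4: B_n(w) ≺ B_n(wt), with strict inequality
exactly at heights strictly between Σ_{i=1}^{a-1} sin θ_{w⁻¹(i)} and Σ_{i=1}^{b} sin θ_{w⁻¹(i)}. -/
theorem covering_step_precedes {n : ℕ} (hn : 2 ≤ n) (w : Equiv.Perm (Fin n)) (a b : Fin n)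
    (hab : a < b) (hw : w⁻¹ a < w⁻¹ b)
    (hl : invLen (Equiv.swap a b * w) = invLen w + 1) :
    ∀ p ∈ border n (Real.pi / 4) w, ∀ q ∈ border n (Real.pi / 4) (Equiv.swap a b * w),
      p.2 = q.2 →
        (p.1 ≤ q.1 ∧
          (p.1 < q.1 ↔
            (vert n (Real.pi / 4) w (a : ℕ)).2 < p.2 ∧
              p.2 < (vert n (Real.pi / 4) w ((b : ℕ) + 1)).2)) :=
  covering_step_precedes_general w a b hab hw
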